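/- arXiv:2206.05232 — 6 statements merged into one kernel-verified Lean document; each statement's English description precedes it below -/
import Mathlib

section
/- Let E be a channel on M_s, S a subchannel from M_d to M_s, and R a subchannel from M_s to M_d. If for every unit vector ψ ∈ ℂ^d there exists a scalar c_ψ such that R(E(S(|ψ⟩⟨ψ|))) = c_ψ·|ψ⟩⟨ψ| (where |ψ⟩⟨ψ| denotes the rank-one orthogonal projection onto the span of ψ), then there exists p ∈ [0,1] such that R(E(S(X))) = p·X for all X ∈ M_d. -/
open Matrix Kronecker BigOperators
open scoped ComplexOrder

noncomputable section

/-- `Mat n` is the space of `n × n` complex matrices. -/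
abbrev Mat (n : ℕ) := Matrix (Fin n) (Fin n) ℂ

/-- A subchannel from `M_n` to `M_m`: a map of Kraus form whose Kraus operators satisfy
`∑ Kᴴ K ≤ 1` in the Loewner order. -/
def IsSubchannel {n m : Type} [Fintype n] [DecidableEq n] [Fintype m]
    (Φ : Matrix n n ℂ → Matrix m m ℂ) : Prop :=
  ∃ (k : ℕ) (K : Fin k → Matrix m n ℂ),
    (∀ X, Φ X = ∑ i, K i * X * (K i)ᴴ) ∧ (1 - ∑ i, (K i)ᴴ * K i).PosSemidef

/-- A channel from `M_n` to `M_m`: a map of Kraus form with `∑ Kᴴ K = 1`. -/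
def IsChannel {n m : Type} [Fintype n] [DecidableEq n] [Fintype m]
    (Φ : Matrix n n ℂ → Matrix m m ℂ) : Prop :=
  ∃ (k : ℕ) (K : Fin k → Matrix m n ℂ),
    (∀ X, Φ X = ∑ i, K i * X * (K i)ᴴ) ∧ (∑ i, (K i)ᴴ * K i) = 1

/-- `E` is probabilistically correctable for `ℂ^d`. -/
def ProbCorrectable (d : ℕ) {s : ℕ} (E : Mat s → Mat s) : Prop :=
  ∃ (S : Mat d → Mat s) (R : Mat s → Mat d) (p : ℝ),
    IsSubchannel S ∧ IsSubchannel R ∧ 0 < p ∧ ∀ X, R (E (S X)) = (p : ℂ) • X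

/-- `E` is perfectly correctable for `ℂ^d`. -/
def PerfCorrectable (d : ℕ) {s : ℕ} (E : Mat s → Mat s) : Prop :=
  ∃ (S : Mat d → Mat s) (R : Mat s → Mat d),
    IsSubchannel S ∧ IsSubchannel R ∧ ∀ X, R (E (S X)) = X

/-- The Choi matrix of a map on `M_s`. -/
def choi {s : ℕ} (Φ : Mat s → Mat s) : Matrix (Fin s × Fin s) (Fin s × Fin s) ℂ :=
  ∑ i : Fin s, ∑ j : Fin s, (Φ (Matrix.single i j 1)) ⊗ₖ (Matrix.single i j 1)

/-- `rP d s`: the largest `r` such that every channel on `M_s` with Choi rank at most `r`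
is probabilistically correctable for `ℂ^d`. -/
def rP (d s : ℕ) : ℕ :=
  sSup {r : ℕ | ∀ E : Mat s → Mat s, IsChannel E → (choi E).rank ≤ r → ProbCorrectable d E}

/-- `rP1 d s`: the largest `r` such that every channel on `M_s` with Choi rank at most `r`
is perfectly correctable for `ℂ^d`. -/
def rP1 (d s : ℕ) : ℕ :=
  sSup {r : ℕ | ∀ E : Mat s → Mat s, IsChannel E → (choi E).rank ≤ r → PerfCorrectable d E}

/-!
`R ∘ E ∘ S` is a linear subchannel for which every rank-one projection `v vᴴ` is an
eigenvector. Feeding it `(eᵢ + a eⱼ)(eᵢ + a eⱼ)ᴴ` for `a = ±1, ±i` and comparing entries shows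
that all these eigenvalues coincide and that the matrix units `Eᵢⱼ` are eigenvectors for the
same eigenvalue `c`, so the composite is `c • id`. Applied to `Eᵢᵢ`, positivity and trace
non-increase of subchannels give `0 ≤ c ≤ 1`.
-/

open scoped MatrixOrder Matrix.Norms.L2Operator in
lemma Matrix.PosSemidef.trace_mul_nonneg {n : Type*} [Fintype n] [DecidableEq n]
    {A B : Matrix n n ℂ} (hA : A.PosSemidef) (hB : B.PosSemidef) : 0 ≤ (A * B).trace := by
  obtain ⟨C, rfl⟩ := CStarAlgebra.nonneg_iff_eq_star_mul_self.mp hA.nonneg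
  rw [Matrix.mul_assoc, Matrix.trace_mul_comm]
  exact (hB.mul_mul_conjTranspose_same C).trace_nonneg

section Subchannel

variable {n m p : Type} [Fintype n] [DecidableEq n] [Fintype m] [Fintype p]

lemma IsChannel.isSubchannel {Φ : Matrix n n ℂ → Matrix m m ℂ} (hΦ : IsChannel Φ) :
    IsSubchannel Φ := by
  obtain ⟨k, K, hK, hsum⟩ := hΦ
  exact ⟨k, K, hK, by rw [hsum, sub_self]; exact .zero⟩

lemma IsSubchannel.of_kraus {ι : Type*} [Fintype ι] {Φ : Matrix n n ℂ → Matrix m m ℂ}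
    (K : ι → Matrix m n ℂ) (hK : ∀ X, Φ X = ∑ i, K i * X * (K i)ᴴ)
    (hle : (1 - ∑ i, (K i)ᴴ * K i).PosSemidef) : IsSubchannel Φ := by
  let e := Fintype.equivFin ι
  refine ⟨Fintype.card ι, fun t => K (e.symm t), fun X => ?_, ?_⟩
  · rw [hK, ← e.symm.sum_comp]
  · rwa [← e.symm.sum_comp] at hle

lemma IsSubchannel.comp [DecidableEq m] {Ψ : Matrix m m ℂ → Matrix p p ℂ}
    {Φ : Matrix n n ℂ → Matrix m m ℂ} (hΨ : IsSubchannel Ψ) (hΦ : IsSubchannel Φ) :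
    IsSubchannel (Ψ ∘ Φ) := by
  obtain ⟨k, K, hK, hKle⟩ := hΨ
  obtain ⟨l, M, hM, hMle⟩ := hΦ
  refine .of_kraus (fun t : Fin k × Fin l => K t.1 * M t.2) (fun X => ?_) ?_
  · simp only [Function.comp_apply, hK, hM, Fintype.sum_prod_type, Matrix.mul_sum,
      Matrix.sum_mul, conjTranspose_mul, Matrix.mul_assoc]
  · have : 1 - ∑ t : Fin k × Fin l, (K t.1 * M t.2)ᴴ * (K t.1 * M t.2) =
        (1 - ∑ j, (M j)ᴴ * M j) + ∑ j, (M j)ᴴ * (1 - ∑ i, (K i)ᴴ * K i) * M j := by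
      simp only [Fintype.sum_prod_type, Matrix.mul_sub, Matrix.sub_mul, Matrix.mul_one,
        Matrix.mul_sum, Matrix.sum_mul, Finset.sum_sub_distrib, conjTranspose_mul,
        Matrix.mul_assoc]
      rw [Finset.sum_comm]
      abel
    rw [this]
    exact hMle.add (posSemidef_sum _ fun j _ => hKle.conjTranspose_mul_mul_same (M j))

lemma IsSubchannel.exists_linearMap {Φ : Matrix n n ℂ → Matrix m m ℂ} (hΦ : IsSubchannel Φ) :
    ∃ L : Matrix n n ℂ →ₗ[ℂ] Matrix m m ℂ, ⇑L = Φ := by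
  obtain ⟨k, K, hK, -⟩ := hΦ
  refine ⟨{ toFun := Φ, map_add' := fun X Y => ?_, map_smul' := fun a X => ?_ }, rfl⟩
  · simp only [hK, Matrix.mul_add, Matrix.add_mul, Finset.sum_add_distrib]
  · simp only [hK, RingHom.id_apply, Finset.smul_sum, Matrix.mul_smul, Matrix.smul_mul]

lemma IsSubchannel.posSemidef {Φ : Matrix n n ℂ → Matrix m m ℂ} (hΦ : IsSubchannel Φ)
    {X : Matrix n n ℂ} (hX : X.PosSemidef) : (Φ X).PosSemidef := by
  obtain ⟨k, K, hK, -⟩ := hΦ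
  rw [hK X]
  exact posSemidef_sum _ fun i _ => hX.mul_mul_conjTranspose_same (K i)

lemma IsSubchannel.trace_le {Φ : Matrix n n ℂ → Matrix m m ℂ} (hΦ : IsSubchannel Φ)
    {X : Matrix n n ℂ} (hX : X.PosSemidef) : (Φ X).trace ≤ X.trace := by
  obtain ⟨k, K, hK, hKle⟩ := hΦ
  have h := hKle.trace_mul_nonneg hX
  rw [Matrix.sub_mul, Matrix.one_mul, Matrix.trace_sub, sub_nonneg, Finset.sum_mul,
    Matrix.trace_sum] at h
  simpa only [hK, Matrix.trace_sum, Matrix.trace_mul_cycle (K _)] using h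

lemma IsSubchannel.exists_ofReal_of_eq_smul [Nonempty n] {Φ : Matrix n n ℂ → Matrix n n ℂ}
    (hΦ : IsSubchannel Φ) {c : ℂ} (hc : ∀ X, Φ X = c • X) : ∃ p : ℝ, 0 ≤ p ∧ p ≤ 1 ∧ c = p := by
  obtain ⟨i⟩ := ‹Nonempty n›
  have hP : (single i i (1 : ℂ)).PosSemidef := by
    simpa [← Pi.single_star, ← single_eq_single_vecMulVec_single] using
      posSemidef_vecMulVec_self_star (Pi.single i (1 : ℂ))
  have h0 : 0 ≤ c := by simpa [hc] using (hΦ.posSemidef hP).trace_nonneg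
  have h1 : c ≤ 1 := by simpa [hc] using hΦ.trace_le hP
  exact ⟨c.re, (Complex.le_def.mp h0).1, (Complex.le_def.mp h1).1,
    Complex.eq_re_of_ofReal_le (by rwa [Complex.ofReal_zero])⟩

end Subchannel

section RankOne

variable {n : Type*}

lemma vecMulVec_smul_star (a : ℂ) (v : n → ℂ) :
    vecMulVec (a • v) (star (a • v)) = (a * star a) • vecMulVec v (star v) := by
  rw [star_smul, smul_vecMulVec, vecMulVec_smul, smul_smul]

lemma exists_smul_of_forall_dotProduct_eq_one [Fintype n] {Φ : Matrix n n ℂ →ₗ[ℂ] Matrix n n ℂ}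
    (h : ∀ ψ : n → ℂ, star ψ ⬝ᵥ ψ = 1 →
      ∃ c : ℂ, Φ (vecMulVec ψ (star ψ)) = c • vecMulVec ψ (star ψ))
    (v : n → ℂ) : ∃ c : ℂ, Φ (vecMulVec v (star v)) = c • vecMulVec v (star v) := by
  rcases eq_or_ne v 0 with rfl | hv
  · exact ⟨0, by simp⟩
  have hpos : 0 < star v ⬝ᵥ v := dotProduct_star_self_pos_iff.mpr hv
  set r := (star v ⬝ᵥ v).re
  have hr : star v ⬝ᵥ v = r := Complex.eq_re_of_ofReal_le hpos.le
  have hr0 : 0 < r := Complex.zero_lt_real.mp (hr ▸ hpos)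
  set t : ℂ := (((√r)⁻¹ : ℝ) : ℂ)
  have ht : t * star t = (r : ℂ)⁻¹ := by
    rw [Complex.star_def, Complex.conj_ofReal, ← Complex.ofReal_mul, ← mul_inv,
      Real.mul_self_sqrt hr0.le, Complex.ofReal_inv]
  have hr0' : (r : ℂ) ≠ 0 := by exact_mod_cast hr0.ne'
  obtain ⟨c, hc⟩ := h (t • v) (by
    rw [star_smul, smul_dotProduct, dotProduct_smul, hr, smul_smul, smul_eq_mul, mul_comm (star t),
      ht, inv_mul_cancel₀ hr0'])
  rw [vecMulVec_smul_star, map_smul, smul_comm] at hc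
  exact ⟨c, smul_right_injective _ (ht ▸ inv_ne_zero hr0') hc⟩

variable [DecidableEq n]

lemma vecMulVec_single_add_smul_single (i j : n) (a : ℂ) :
    vecMulVec (Pi.single i 1 + a • Pi.single j 1) (star (Pi.single i 1 + a • Pi.single j 1)) =
      single i i 1 + star a • single i j 1 + a • single j i 1 + (a * star a) • single j j 1 := by
  simp only [star_add, star_smul, ← Pi.single_star, star_one, add_vecMulVec, vecMulVec_add,
    smul_vecMulVec, vecMulVec_smul, ← single_eq_single_vecMulVec_single]
  module

variable {Φ : Matrix n n ℂ →ₗ[ℂ] Matrix n n ℂ} {k : (n → ℂ) → ℂ}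

lemma map_single_self (hk : ∀ v, Φ (vecMulVec v (star v)) = k v • vecMulVec v (star v)) (i : n) :
    Φ (single i i 1) = k (Pi.single i 1) • single i i 1 := by
  simpa [← Pi.single_star, ← single_eq_single_vecMulVec_single] using hk (Pi.single i 1)

lemma map_single_of_ne (hk : ∀ v, Φ (vecMulVec v (star v)) = k v • vecMulVec v (star v))
    {i j : n} (hij : i ≠ j) {a : ℂ} (ha : a * star a = 1) :
    k (Pi.single j 1) = k (Pi.single i 1) ∧
      star a • Φ (single i j 1) + a • Φ (single j i 1) =
        k (Pi.single i 1) • (star a • single i j 1 + a • single j i 1) := by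
  have expand : ∀ b : ℂ, b * star b = 1 →
      k (Pi.single i 1) • single i i 1 + star b • Φ (single i j 1) + b • Φ (single j i 1) +
        k (Pi.single j 1) • single j j 1 =
      k (Pi.single i 1 + b • Pi.single j 1) •
        (single i i 1 + star b • single i j 1 + b • single j i 1 + single j j 1) := by
    intro b hb
    have := hk (Pi.single i 1 + b • Pi.single j 1)
    rwa [vecMulVec_single_add_smul_single, hb, one_smul, map_add, map_add, map_add, map_smul,
      map_smul, map_single_self hk, map_single_self hk] at this
  have hp := expand a ha
  have hm := expand (-a) (by rwa [star_neg, neg_mul_neg])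
  set ci := k (Pi.single i 1)
  set kp := k (Pi.single i 1 + a • Pi.single j 1)
  set km := k (Pi.single i 1 + (-a) • Pi.single j 1)
  have epii := congr_fun₂ hp i i
  have emii := congr_fun₂ hm i i
  have epjj := congr_fun₂ hp j j
  have emjj := congr_fun₂ hm j j
  have epij := congr_fun₂ hp i j
  have emij := congr_fun₂ hm i j
  simp only [smul_single, smul_eq_mul, mul_one, RCLike.star_def, Matrix.add_apply,
    single_apply_same, Matrix.smul_apply, hij.symm, and_self, not_false_eq_true,
    single_apply_of_ne, add_zero, and_false, and_true, star_neg, neg_smul, Matrix.neg_apply,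
    neg_zero, hij, zero_add, mul_neg] at epii emii epjj emjj epij emij
  rw [Complex.star_def] at ha
  -- The `(i, j)` entries for `±a` force `kp = km`; the diagonal entries then equate both with
  -- the eigenvalues at `eᵢ` and `eⱼ`.
  have hkpm : kp = km := by linear_combination -a * (epij + emij) - (kp - km) * ha
  have hkp : kp = ci := by linear_combination -(epii + emii) / 2 + hkpm / 2
  refine ⟨by linear_combination (epjj + emjj) / 2 + hkp - hkpm / 2, ?_⟩
  rw [hkp] at hp
  rw [← hkpm, hkp, star_neg] at hm
  linear_combination (norm := module) (1 / 2 : ℂ) • (hp - hm)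

theorem LinearMap.exists_eq_smul_of_forall_vecMulVec [Fintype n]
    (h : ∀ v : n → ℂ, ∃ c : ℂ, Φ (vecMulVec v (star v)) = c • vecMulVec v (star v)) :
    ∃ c : ℂ, ∀ X, Φ X = c • X := by
  choose k hk using h
  rcases isEmpty_or_nonempty n with hn | ⟨⟨i₀⟩⟩
  · exact ⟨0, fun X => Subsingleton.elim _ _⟩
  set c := k (Pi.single i₀ 1)
  have hconst : ∀ i, k (Pi.single i 1) = c := by
    intro i
    rcases eq_or_ne i₀ i with rfl | hi
    · rfl
    · exact (map_single_of_ne hk hi (a := 1) (by simp)).1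
  have hsingle : ∀ i j : n, Φ (Matrix.single i j 1) = c • Matrix.single i j 1 := by
    intro i j
    rcases eq_or_ne i j with rfl | hij
    · rw [map_single_self hk, hconst]
    · have h₁ := (map_single_of_ne hk hij (a := 1) (by simp)).2
      have hI := (map_single_of_ne hk hij (a := Complex.I) (by simp)).2
      rw [hconst, star_one] at h₁
      rw [hconst, Complex.star_def, Complex.conj_I] at hI
      linear_combination (norm := module) (1 / 2 : ℂ) • h₁ + (Complex.I / 2) • hI +
        Complex.I_sq • ((1 / 2 : ℂ) • (Φ (Matrix.single i j 1) - Φ (Matrix.single j i 1) -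
          c • Matrix.single i j 1 + c • Matrix.single j i 1))
  have hΦ : Φ = c • LinearMap.id := by
    refine Matrix.ext_linearMap ℂ fun i j => LinearMap.ext fun x => ?_
    have hx : Matrix.single i j x = x • Matrix.single i j 1 := by
      rw [smul_single, smul_eq_mul, mul_one]
    simp only [LinearMap.comp_apply, singleLinearMap_apply, LinearMap.smul_apply,
      LinearMap.id_apply, hx, map_smul, hsingle]
  exact ⟨c, fun X => by rw [hΦ]; rfl⟩

end RankOne

/-- Lemma (constant probability): if `R∘E∘S` fixes every pure-state projection up to a scalar,
then `R∘E∘S = p · id` for some `p ∈ [0,1]`. -/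
theorem stmt_2 (d s : ℕ)
    (E : Mat s → Mat s) (S : Mat d → Mat s) (R : Mat s → Mat d)
    (hE : IsChannel E) (hS : IsSubchannel S) (hR : IsSubchannel R)
    (h : ∀ ψ : Fin d → ℂ, star ψ ⬝ᵥ ψ = 1 →
      ∃ c : ℂ, R (E (S (vecMulVec ψ (star ψ)))) = c • vecMulVec ψ (star ψ)) :
    ∃ p : ℝ, 0 ≤ p ∧ p ≤ 1 ∧ ∀ X : Mat d, R (E (S X)) = (p : ℂ) • X := by
  have hΦ : IsSubchannel (R ∘ E ∘ S) := hR.comp (hE.isSubchannel.comp hS)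
  obtain ⟨L, hL⟩ := hΦ.exists_linearMap
  obtain ⟨c, hc⟩ := L.exists_eq_smul_of_forall_vecMulVec
    (exists_smul_of_forall_dotProduct_eq_one (by simpa only [hL, Function.comp_apply] using h))
  rw [hL] at hc
  rcases isEmpty_or_nonempty (Fin d)
  · exact ⟨0, le_rfl, zero_le_one, fun X => Subsingleton.elim _ _⟩
  obtain ⟨p, hp0, hp1, rfl⟩ := hΦ.exists_ofReal_of_eq_smul hc
  exact ⟨p, hp0, hp1, hc⟩
end
end

section
/- Let E be a channel on M_s and suppose there exist a subchannel S from M_d to M_s, a subchannel R from M_s to M_d, and a real p > 0 such that R(E(S(X))) = p·X for all X ∈ M_d. Then there exist a channel S̃ from M_d to M_s and a subchannel R̃ from M_s to M_d such that R̃(E(S̃(X))) = p·X for all X ∈ M_d (with the same p). -/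
open Matrix Kronecker BigOperators
open scoped ComplexOrder

noncomputable section

/-!
Let `Kᵢ` be Kraus operators of `S` and `T = ∑ Kᵢᴴ Kᵢ ≤ 1`. Since `R ∘ E ∘ S = p • id` with `p ≠ 0`,
`S` is injective, which forces `T` to be invertible. Factor `T = Qᴴ Q`. Then
`S̃ X = S (Q⁻¹ X Q⁻¹ᴴ)` has Kraus operators `Kᵢ Q⁻¹` with `∑ Q⁻¹ᴴ T Q⁻¹ = 1`, so it is a channel,
while `R̃ Y = Q (R Y) Qᴴ` stays a subchannel because `Qᴴ Q = T ≤ 1`; and `R̃ ∘ E ∘ S̃ = p • id`.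
-/

section Kraus

variable {n m : Type} [Fintype n] [Fintype m]

lemma mulVec_eq_zero_of_sum_conjTranspose_mul_self_mulVec_eq_zero {k : ℕ}
    (K : Fin k → Matrix m n ℂ) {v : n → ℂ} (hv : (∑ i, (K i)ᴴ * K i) *ᵥ v = 0) (i : Fin k) :
    K i *ᵥ v = 0 := by
  have hsum : ∑ j, star (K j *ᵥ v) ⬝ᵥ K j *ᵥ v = 0 := by
    simpa only [Matrix.sum_mulVec, dotProduct_sum, ← Matrix.mulVec_mulVec,
      dotProduct_mulVec, ← star_mulVec, dotProduct_zero] using congrArg (star v ⬝ᵥ ·) hv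
  have hterm := (Finset.sum_eq_zero_iff_of_nonneg fun j _ =>
    dotProduct_star_self_nonneg (K j *ᵥ v)).mp hsum i (Finset.mem_univ i)
  exact dotProduct_star_self_eq_zero.mp hterm

/-- A vector `v` in the kernel of `∑ Kᵢᴴ Kᵢ` is killed by every `Kᵢ`, so the Kraus map sends
`v vᴴ` to `0` and `Ψ` cannot recover it. -/
lemma isUnit_det_sum_conjTranspose_mul_self_of_comp_eq_smul [DecidableEq n] {k : ℕ}
    (K : Fin k → Matrix m n ℂ) (Ψ : Matrix m m ℂ → Matrix n n ℂ) {c : ℂ} (hc : c ≠ 0)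
    (hΨ : ∀ X, Ψ (∑ i, K i * X * (K i)ᴴ) = c • X) :
    IsUnit (∑ i, (K i)ᴴ * K i).det := by
  rw [isUnit_iff_ne_zero]
  intro hdet
  obtain ⟨v, hv0, hv⟩ := Matrix.exists_mulVec_eq_zero_iff.mpr hdet
  have hKv := mulVec_eq_zero_of_sum_conjTranspose_mul_self_mulVec_eq_zero K hv
  have hkill : ∑ i, K i * vecMulVec v (star v) * (K i)ᴴ
      = ∑ i, K i * (0 : Matrix n n ℂ) * (K i)ᴴ := by
    simp only [Matrix.mul_vecMulVec, hKv, zero_vecMulVec, Matrix.mul_zero, Matrix.zero_mul]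
  have hzero : c • vecMulVec v (star v) = 0 := by
    rw [← hΨ, hkill, hΨ, smul_zero]
  exact hv0 (by simpa [hc] using hzero)

lemma IsSubchannel.conj [DecidableEq n] {m' : Type} [Fintype m'] [DecidableEq m]
    {Ψ : Matrix n n ℂ → Matrix m m ℂ} (hΨ : IsSubchannel Ψ) (Q : Matrix m' m ℂ)
    (hQ : (1 - Qᴴ * Q).PosSemidef) : IsSubchannel fun Y => Q * Ψ Y * Qᴴ := by
  obtain ⟨k, L, hΨL, hL⟩ := hΨ
  refine ⟨k, fun j => Q * L j, fun Y => ?_, ?_⟩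
  · simp only [hΨL, Matrix.mul_sum, Matrix.sum_mul, Matrix.conjTranspose_mul, Matrix.mul_assoc]
  · have hsplit : 1 - ∑ j, (Q * L j)ᴴ * (Q * L j)
        = (1 - ∑ j, (L j)ᴴ * L j) + ∑ j, (L j)ᴴ * (1 - Qᴴ * Q) * L j := by
      simp only [Matrix.conjTranspose_mul, Matrix.mul_sub, Matrix.sub_mul, Matrix.mul_one,
        Finset.sum_sub_distrib, Matrix.mul_assoc]
      abel
    rw [hsplit]
    exact hL.add (posSemidef_sum _ fun j _ => hQ.conjTranspose_mul_mul_same (L j))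

lemma isChannel_comp_conj [DecidableEq n] {n' : Type} [Fintype n'] [DecidableEq n'] {k : ℕ}
    {Φ : Matrix n n ℂ → Matrix m m ℂ} (K : Fin k → Matrix m n ℂ)
    (hΦ : ∀ X, Φ X = ∑ i, K i * X * (K i)ᴴ) (W : Matrix n n' ℂ)
    (hW : Wᴴ * (∑ i, (K i)ᴴ * K i : Matrix n n ℂ) * W = 1) :
    IsChannel fun X : Matrix n' n' ℂ => Φ (W * X * Wᴴ) := by
  refine ⟨k, fun i => K i * W, fun X => ?_, ?_⟩
  · simp only [hΦ, Matrix.conjTranspose_mul, Matrix.mul_assoc]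
  · simpa only [Matrix.mul_sum, Matrix.sum_mul, Matrix.conjTranspose_mul, Matrix.mul_assoc]
      using hW

end Kraus

theorem stmt_3_general (d s : ℕ) (E : Mat s → Mat s) (p : ℝ) (hp : 0 < p)
    (h : ∃ (S : Mat d → Mat s) (R : Mat s → Mat d),
      IsSubchannel S ∧ IsSubchannel R ∧ ∀ X : Mat d, R (E (S X)) = (p : ℂ) • X) :
    ∃ (St : Mat d → Mat s) (Rt : Mat s → Mat d),
      IsChannel St ∧ IsSubchannel Rt ∧ ∀ X : Mat d, Rt (E (St X)) = (p : ℂ) • X := by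
  obtain ⟨S, R, ⟨k, K, hSK, hK⟩, hR, hRES⟩ := h
  have hT : IsUnit (∑ i, (K i)ᴴ * K i).det :=
    isUnit_det_sum_conjTranspose_mul_self_of_comp_eq_smul K (fun Y => R (E Y))
      (c := p) (by exact_mod_cast hp.ne') fun X => by rw [← hSK]; exact hRES X
  obtain ⟨Q, hTQ⟩ : ∃ Q : Mat d, ∑ i, (K i)ᴴ * K i = Qᴴ * Q := by
    open scoped MatrixOrder in
    exact CStarAlgebra.nonneg_iff_eq_star_mul_self.mp (posSemidef_sum _ fun i _ =>
      posSemidef_conjTranspose_mul_self (K i)).nonneg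
  have hQ : IsUnit Q.det := by
    rw [hTQ, Matrix.det_mul] at hT
    exact isUnit_of_mul_isUnit_right hT
  have hQQinv : Q * Q⁻¹ = 1 := Matrix.mul_nonsing_inv Q hQ
  refine ⟨fun X => S (Q⁻¹ * X * Q⁻¹ᴴ), fun Y => Q * R Y * Qᴴ,
    isChannel_comp_conj K hSK Q⁻¹ ?_, hR.conj Q (hTQ ▸ hK), fun X => ?_⟩
  · rw [hTQ, ← Matrix.mul_assoc, ← Matrix.conjTranspose_mul, Matrix.mul_assoc, hQQinv,
      Matrix.conjTranspose_one, Matrix.one_mul]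
  · calc Q * R (E (S (Q⁻¹ * X * Q⁻¹ᴴ))) * Qᴴ = (p : ℂ) • ((Q * Q⁻¹) * X * (Q * Q⁻¹)ᴴ) := by
          rw [hRES, Matrix.mul_smul, Matrix.smul_mul]
          simp only [Matrix.conjTranspose_mul, Matrix.mul_assoc]
      _ = (p : ℂ) • X := by rw [hQQinv, Matrix.conjTranspose_one, Matrix.one_mul, Matrix.mul_one]

/-- Proposition 2 (A): the encoding can be chosen to be a channel, with the same `p`. -/
theorem stmt_3 (d s : ℕ) (E : Mat s → Mat s) (hE : IsChannel E) (p : ℝ) (hp : 0 < p)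
    (h : ∃ (S : Mat d → Mat s) (R : Mat s → Mat d),
      IsSubchannel S ∧ IsSubchannel R ∧ ∀ X : Mat d, R (E (S X)) = (p : ℂ) • X) :
    ∃ (St : Mat d → Mat s) (Rt : Mat s → Mat d),
      IsChannel St ∧ IsSubchannel Rt ∧ ∀ X : Mat d, Rt (E (St X)) = (p : ℂ) • X :=
  stmt_3_general d s E p hp h
end
end

section
/- Let E be a channel on M_s and let R be a channel from M_s to M_d. If there exist a subchannel S from M_d to M_s and a real p > 0 such that R(E(S(X))) = p·X for all X ∈ M_d, then there exists an s×d complex matrix S̃ with S̃* S̃ = I_d such that R(E(S̃ X S̃*)) = X for all X ∈ M_d. -/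
open Matrix Kronecker BigOperators
open scoped ComplexOrder

noncomputable section

/-! If `R ∘ E ∘ S = p • id` with Kraus operators `L j` of `R ∘ E` and `K i` of `S`, then the
operators `L j * K i` are Kraus operators of `p • id`, and such operators are all scalar:
`L j * K i = c j i • 1`. Choose `i` with `c · i ≠ 0`. Since `∑ (L j)ᴴ * L j = 1`,
`(K i)ᴴ * K i = (∑ j, |c j i|²) • 1`, so a rescaling `V` of `K i` is an isometry; and
`L j * V` is a scalar with `∑ j |·|² = 1`, so `R (E (V * X * Vᴴ)) = X`. -/

section Kraus

variable {ι κ l m n : Type} [Fintype ι] [Fintype κ]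

def HasKraus [Fintype n] (Φ : Matrix n n ℂ → Matrix m m ℂ) (K : ι → Matrix m n ℂ) : Prop :=
  ∀ X, Φ X = ∑ i, K i * X * (K i)ᴴ

theorem HasKraus.comp [Fintype m] [Fintype n] {Φ : Matrix n n ℂ → Matrix m m ℂ}
    {Ψ : Matrix m m ℂ → Matrix l l ℂ} {K : ι → Matrix m n ℂ} {L : κ → Matrix l m ℂ}
    (hΨ : HasKraus Ψ L) (hΦ : HasKraus Φ K) :
    HasKraus (Ψ ∘ Φ) (fun ji : κ × ι => L ji.1 * K ji.2) := by
  intro X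
  simp only [Function.comp_apply, hΦ X, hΨ _, Fintype.sum_prod_type, Matrix.mul_sum,
    Matrix.sum_mul, conjTranspose_mul, Matrix.mul_assoc]

theorem sum_conjTranspose_mul_mul_self [Fintype l] [Fintype m] (L : κ → Matrix l m ℂ)
    (K : Matrix m n ℂ) : ∑ j, (L j * K)ᴴ * (L j * K) = Kᴴ * (∑ j, (L j)ᴴ * L j) * K := by
  simp only [conjTranspose_mul, Matrix.mul_sum, Matrix.sum_mul, Matrix.mul_assoc]

theorem sum_conjTranspose_mul_comp [Fintype l] [Fintype m] [DecidableEq m]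
    {L : κ → Matrix l m ℂ} (hL : ∑ j, (L j)ᴴ * L j = 1) (K : ι → Matrix m n ℂ) :
    ∑ ji : κ × ι, (L ji.1 * K ji.2)ᴴ * (L ji.1 * K ji.2) = ∑ i, (K i)ᴴ * K i := by
  simp only [Fintype.sum_prod_type_right, sum_conjTranspose_mul_mul_self, hL, Matrix.mul_one]

theorem HasKraus.exists_eq_smul_one [Fintype n] [DecidableEq n] {A : ι → Matrix n n ℂ} {p : ℂ}
    (hA : HasKraus (p • ·) A) : ∃ c : ι → ℂ, ∀ i, A i = c i • 1 := by
  rcases isEmpty_or_nonempty n with hn | ⟨⟨z⟩⟩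
  · exact ⟨0, fun i => Subsingleton.elim _ _⟩
  -- Testing on matrix units gives `hcol`, whence `‖col r u‖² = 0` for `r ≠ u` and
  -- `‖col u u - col z z‖² = p - p - p + p = 0`.
  let col (r u : n) : ι → ℂ := fun i => A i r u
  have hcol (r u t v : n) : col r u ⬝ᵥ star (col t v) = if u = r ∧ v = t then p else 0 := by
    have := congrFun₂ (hA (single u v 1)) r t
    simp only [Matrix.smul_apply, Matrix.sum_apply, Matrix.mul_apply, single_apply] at this
    simpa [dotProduct, col, ite_and] using this.symm
  have hoff (r u : n) (hru : r ≠ u) : col r u = 0 :=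
    dotProduct_self_star_eq_zero.mp (by simp [hcol, hru.symm])
  have hdiag (u : n) : col u u = col z z :=
    sub_eq_zero.mp (dotProduct_self_star_eq_zero.mp (by
      simp [star_sub, sub_dotProduct, dotProduct_sub, hcol]))
  refine ⟨fun i => A i z z, fun i => ?_⟩
  ext r u
  rcases eq_or_ne r u with rfl | hru
  · simpa using congrFun (hdiag r) i
  · simpa [one_apply_ne hru] using congrFun (hoff r u hru) i

theorem HasKraus.exists_ne_zero [Fintype n] [DecidableEq n] [Nonempty n] {A : ι → Matrix n n ℂ}
    {p : ℂ} (hp : p ≠ 0) (hA : HasKraus (p • ·) A) : ∃ i, A i ≠ 0 := by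
  by_contra! h0
  simpa [h0, hp] using hA 1

theorem conjTranspose_mul_self_eq_of_mul_eq_smul_one [Fintype l] [Fintype m] [DecidableEq l]
    [DecidableEq m] {L : κ → Matrix l m ℂ} (hL : ∑ j, (L j)ᴴ * L j = 1) {K : Matrix m l ℂ}
    {c : κ → ℂ} (hLK : ∀ j, L j * K = c j • 1) :
    Kᴴ * K = ((∑ j, Complex.normSq (c j) : ℝ) : ℂ) • 1 :=
  calc Kᴴ * K = Kᴴ * (∑ j, (L j)ᴴ * L j) * K := by rw [hL, Matrix.mul_one]
    _ = ∑ j, (L j * K)ᴴ * (L j * K) := (sum_conjTranspose_mul_mul_self L K).symm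
    _ = _ := by simp [hLK, Finset.sum_smul, Complex.mul_conj, smul_smul]

theorem sum_mul_mul_conjTranspose_of_mul_eq_smul_one [Fintype l] [Fintype m] [DecidableEq l]
    {L : κ → Matrix l m ℂ} {K : Matrix m l ℂ} {c : κ → ℂ} (hLK : ∀ j, L j * K = c j • 1)
    (X : Matrix l l ℂ) :
    ∑ j, L j * (K * X * Kᴴ) * (L j)ᴴ = ((∑ j, Complex.normSq (c j) : ℝ) : ℂ) • X := by
  have hterm (j : κ) : L j * (K * X * Kᴴ) * (L j)ᴴ = ((Complex.normSq (c j) : ℝ) : ℂ) • X := by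
    rw [show L j * (K * X * Kᴴ) * (L j)ᴴ = (L j * K) * X * (L j * K)ᴴ by
      simp only [conjTranspose_mul, Matrix.mul_assoc], hLK, Complex.normSq_eq_conj_mul_self]
    simp [smul_smul, mul_comm]
  rw [Complex.ofReal_sum, Finset.sum_smul]
  exact Finset.sum_congr rfl fun j _ => hterm j

theorem exists_isometry_of_mul_eq_smul_one [Fintype l] [Fintype m] [DecidableEq l]
    [DecidableEq m] {L : κ → Matrix l m ℂ} (hL : ∑ j, (L j)ᴴ * L j = 1) {K : Matrix m l ℂ}
    {c : κ → ℂ} (hLK : ∀ j, L j * K = c j • 1) (hc : c ≠ 0) :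
    ∃ V : Matrix m l ℂ, Vᴴ * V = 1 ∧ ∀ X : Matrix l l ℂ, ∑ j, L j * (V * X * Vᴴ) * (L j)ᴴ = X := by
  set g := ∑ j, Complex.normSq (c j)
  have hg : 0 < g := by
    obtain ⟨j, hj⟩ := Function.ne_iff.mp hc
    exact Finset.sum_pos' (fun j _ => Complex.normSq_nonneg (c j))
      ⟨j, Finset.mem_univ j, Complex.normSq_pos.mpr hj⟩
  set r : ℂ := (((√g)⁻¹ : ℝ) : ℂ)
  have hLV (j : κ) : L j * (r • K) = (r * c j) • 1 := by rw [Matrix.mul_smul, hLK, smul_smul]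
  have hnorm : ∑ j, Complex.normSq (r * c j) = 1 := by
    simp [r, g, Complex.normSq_mul, ← Finset.mul_sum, hg.le, hg.ne']
  refine ⟨r • K, ?_, fun X => ?_⟩
  · rw [conjTranspose_mul_self_eq_of_mul_eq_smul_one hL hLV, hnorm]; simp
  · rw [sum_mul_mul_conjTranspose_of_mul_eq_smul_one hLV, hnorm]; simp

end Kraus

/-- Proposition 2 (B): if the recovery `R` is a channel, then there is an isometric encoding
`X ↦ S̃ X S̃ᴴ` correcting `E` perfectly. -/
theorem stmt_4 (d s : ℕ) (E : Mat s → Mat s) (R : Mat s → Mat d)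
    (hE : IsChannel E) (hR : IsChannel R)
    (h : ∃ (S : Mat d → Mat s) (p : ℝ),
      IsSubchannel S ∧ 0 < p ∧ ∀ X : Mat d, R (E (S X)) = (p : ℂ) • X) :
    ∃ St : Matrix (Fin s) (Fin d) ℂ, Stᴴ * St = 1 ∧
      ∀ X : Mat d, R (E (St * X * Stᴴ)) = X := by
  rcases isEmpty_or_nonempty (Fin d) with hd | hd
  · exact ⟨0, Subsingleton.elim _ _, fun X => Subsingleton.elim _ _⟩
  obtain ⟨kE, KE, hKE, hE1⟩ := hE
  obtain ⟨kR, KR, hKR, hR1⟩ := hR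
  obtain ⟨S, p, ⟨kS, KS, hKS, -⟩, hp, hcorr⟩ := h
  let L (ji : Fin kR × Fin kE) := KR ji.1 * KE ji.2
  have hL : HasKraus (R ∘ E) L := HasKraus.comp hKR hKE
  have hL1 : ∑ j, (L j)ᴴ * L j = 1 := (sum_conjTranspose_mul_comp hR1 KE).trans hE1
  have hA : HasKraus ((p : ℂ) • ·) (fun ji : _ × Fin kS => L ji.1 * KS ji.2) :=
    fun X => (hcorr X).symm.trans (hL.comp hKS X)
  obtain ⟨c, hc⟩ := hA.exists_eq_smul_one
  obtain ⟨⟨j, i⟩, hji⟩ := hA.exists_ne_zero (by exact_mod_cast hp.ne')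
  have hci : (fun j => c (j, i)) ≠ 0 := fun h0 =>
    hji (by rw [hc, congrFun h0 j, Pi.zero_apply, zero_smul])
  have hLK : ∀ j, L j * KS i = c (j, i) • 1 := fun j => hc (j, i)
  obtain ⟨V, hV, hLV⟩ := exists_isometry_of_mul_eq_smul_one hL1 hLK hci
  exact ⟨V, hV, fun X => (hL _).trans (hLV X)⟩
end
end

section
/- Let 1 ≤ d ≤ s. Then every channel E on M_s that is probabilistically correctable for ℂ^d satisfies rank J(E) ≤ s² − d² + 1, and there exists a channel E on M_s that is probabilistically correctable for ℂ^d with rank J(E) = s² − d² + 1. -/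
open Matrix Kronecker BigOperators
open scoped ComplexOrder

noncomputable section

/-!
If `R ∘ E ∘ S = p • id` with `p > 0`, the composed Kraus operators `R_b K_i S_a` are Kraus
operators of a multiple of the identity channel, hence scalar matrices `c • 1`, and some `c` is
nonzero. For that pair `(a, b)` the map `T ↦ R_b T S_a` is onto `M_d` and sends every Kraus
operator `K_i` of `E` into `ℂ ∙ 1`; so the `K_i` span a space of dimension at most `s² - d² + 1`,
and this dimension is the Choi rank.

Conversely, the matrix units outside the top-left `d × d` corner, together with a diagonal matrix
that is constant on the corner, can be weighted into the Kraus operators of a channel that is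
corrected by compressing to the corner; they are linearly independent, which gives the Choi rank
`s² - d² + 1`.
-/

section Kraus

variable {ι n m : Type} [Fintype ι] [Fintype n] [DecidableEq n] [Fintype m]

lemma isSubchannel_kraus (K : ι → Matrix m n ℂ) (hK : (1 - ∑ i, (K i)ᴴ * K i).PosSemidef) :
    IsSubchannel fun X : Matrix n n ℂ => ∑ i, K i * X * (K i)ᴴ :=
  ⟨_, K ∘ (Fintype.equivFin ι).symm, fun X =>
    (Equiv.sum_comp _ fun i => K i * X * (K i)ᴴ).symm, by
    rwa [Function.comp_def, Equiv.sum_comp _ fun i => (K i)ᴴ * K i]⟩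

lemma isChannel_kraus (K : ι → Matrix m n ℂ) (hK : ∑ i, (K i)ᴴ * K i = 1) :
    IsChannel fun X : Matrix n n ℂ => ∑ i, K i * X * (K i)ᴴ :=
  ⟨_, K ∘ (Fintype.equivFin ι).symm, fun X =>
    (Equiv.sum_comp _ fun i => K i * X * (K i)ᴴ).symm, by
    rwa [Function.comp_def, Equiv.sum_comp _ fun i => (K i)ᴴ * K i]⟩

end Kraus

lemma sum_kraus_comp {ι κ n m l : Type} [Fintype ι] [Fintype κ]
    [Fintype n] [Fintype m] (A : ι → Matrix l m ℂ) (B : κ → Matrix m n ℂ) (X : Matrix n n ℂ) :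
    ∑ i, A i * (∑ j, B j * X * (B j)ᴴ) * (A i)ᴴ
      = ∑ t : ι × κ, (A t.1 * B t.2) * X * (A t.1 * B t.2)ᴴ := by
  simp only [Fintype.sum_prod_type, Matrix.mul_sum, Matrix.sum_mul, conjTranspose_mul,
    Matrix.mul_assoc]

def krausMat {s : ℕ} {ι : Type} (K : ι → Mat s) : Matrix (Fin s × Fin s) ι ℂ :=
  Matrix.of fun p t => K t p.1 p.2

lemma choi_kraus {s : ℕ} {ι : Type} [Fintype ι] (K : ι → Mat s) :
    choi (fun X => ∑ i, K i * X * (K i)ᴴ) = krausMat K * (krausMat K)ᴴ := by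
  ext ⟨a, b⟩ ⟨a', b'⟩
  simp [choi, krausMat, Matrix.sum_apply, Matrix.mul_apply, Matrix.single, ite_and,
    conjTranspose_apply]

lemma rank_choi_kraus {s : ℕ} {ι : Type} [Fintype ι] (K : ι → Mat s) :
    (choi (fun X => ∑ i, K i * X * (K i)ᴴ)).rank
      = Module.finrank ℂ (Submodule.span ℂ (Set.range K)) := by
  let vec : Mat s ≃ₗ[ℂ] (Fin s × Fin s → ℂ) := (LinearEquiv.curry ℂ ℂ (Fin s) (Fin s)).symm
  have hcols : Set.range (krausMat K).col = vec '' Set.range K := by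
    rw [← Set.range_comp]; rfl
  rw [choi_kraus, rank_self_mul_conjTranspose, rank_eq_finrank_span_cols, hcols,
    Submodule.span_image_linearEquiv, LinearEquiv.finrank_map_eq]

lemma exists_eq_smul_one_of_kraus_eq_smul {ι n : Type} [Fintype ι] [Fintype n] [DecidableEq n]
    (M : ι → Matrix n n ℂ) (p : ℂ) (hM : ∀ X, ∑ i, M i * X * (M i)ᴴ = p • X) (i : ι) :
    ∃ c : ℂ, M i = c • 1 := by
  have gram : ∀ a l b m, ∑ i, M i a l * star (M i b m) = if l = a ∧ m = b then p else 0 := by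
    intro a l b m
    have entry : ∀ K : Matrix n n ℂ,
        (K * single l m (1 : ℂ) * Kᴴ : Matrix n n ℂ) a b = K a l * star (K b m) := fun K => by
      simp [Matrix.mul_apply, Matrix.single, ite_and, conjTranspose_apply]
    have := congr_fun₂ (hM (single l m 1)) a b
    simp only [Matrix.sum_apply, entry, Matrix.smul_apply, smul_eq_mul] at this
    rw [this, single_apply, mul_ite, mul_one, mul_zero]
  have off_diag : ∀ a l, a ≠ l → M i a l = 0 := fun a l hal =>
    congr_fun ((dotProduct_self_star_eq_zero (v := fun j => M j a l)).1 (by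
      simp only [dotProduct, Pi.star_apply, gram, hal.symm, false_and, if_false])) i
  have diag : ∀ a b, M i a a = M i b b := by
    intro a b
    have h : (fun j => M j a a - M j b b) ⬝ᵥ star (fun j => M j a a - M j b b) = 0 := by
      simp only [dotProduct, Pi.star_apply, star_sub, sub_mul, mul_sub, Finset.sum_sub_distrib,
        gram, and_self, if_true, sub_self]
    exact sub_eq_zero.1 (congr_fun (dotProduct_self_star_eq_zero.1 h) i)
  rcases isEmpty_or_nonempty n with _ | ⟨⟨a⟩⟩
  · exact ⟨0, Subsingleton.elim _ _⟩
  refine ⟨M i a a, Matrix.ext fun x y => ?_⟩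
  by_cases hxy : x = y
  · subst hxy; simp [diag x a]
  · simp [off_diag x y hxy, hxy]

lemma finrank_comap_span_singleton_add {K V W : Type*} [Field K] [AddCommGroup V] [Module K V]
    [FiniteDimensional K V] [AddCommGroup W] [Module K W] [FiniteDimensional K W]
    (L : V →ₗ[K] W) (hL : Function.Surjective L) {w : W} (hw : w ≠ 0) :
    Module.finrank K (Submodule.comap L (K ∙ w)) + Module.finrank K W
      = Module.finrank K V + 1 := by
  let q := (K ∙ w).mkQ ∘ₗ L
  have hker : LinearMap.ker q = Submodule.comap L (K ∙ w) := by
    rw [LinearMap.ker_comp, Submodule.ker_mkQ]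
  have hrange : LinearMap.range q = ⊤ :=
    LinearMap.range_eq_top.2 ((Submodule.mkQ_surjective _).comp hL)
  have hquot := Submodule.finrank_quotient_add_finrank (K ∙ w)
  rw [finrank_span_singleton hw] at hquot
  have := LinearMap.finrank_range_add_finrank_ker q
  rw [hker, hrange, finrank_top] at this
  omega

def sandwich {l m n o : Type} [Fintype m] [Fintype n] (B : Matrix l m ℂ) (C : Matrix n o ℂ) :
    Matrix m n ℂ →ₗ[ℂ] Matrix l o ℂ where
  toFun T := B * T * C
  map_add' _ _ := by simp [Matrix.mul_add, Matrix.add_mul]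
  map_smul' _ _ := by simp

@[simp]
lemma sandwich_apply {l m n o : Type} [Fintype m] [Fintype n] (B : Matrix l m ℂ)
    (C : Matrix n o ℂ) (T : Matrix m n ℂ) : sandwich B C T = B * T * C :=
  rfl

lemma sandwich_surjective {l m : Type} [Fintype l] [DecidableEq l] [Fintype m]
    {B : Matrix l m ℂ} {C : Matrix m l ℂ} {T : Matrix m m ℂ} {c : ℂ} (hc : c ≠ 0)
    (hT : B * T * C = c • 1) : Function.Surjective (sandwich B C) := by
  intro Y
  refine ⟨(c ^ 2)⁻¹ • (T * C * Y * B * T), ?_⟩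
  -- `B (T C Y B T) C = (B T C) Y (B T C) = c² Y`
  calc sandwich B C ((c ^ 2)⁻¹ • (T * C * Y * B * T))
      = (c ^ 2)⁻¹ • ((B * T * C) * Y * (B * T * C)) := by
        simp only [sandwich_apply, Matrix.mul_smul, Matrix.smul_mul, Matrix.mul_assoc]
    _ = Y := by
        rw [hT, Matrix.smul_mul, Matrix.mul_smul, Matrix.one_mul, Matrix.mul_one, smul_smul,
          smul_smul, mul_assoc, ← sq, inv_mul_cancel₀ (pow_ne_zero 2 hc), one_smul]

theorem rank_choi_le_of_probCorrectable {d s : ℕ} {E : Mat s → Mat s} (hE : IsChannel E)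
    (hcorr : ProbCorrectable d E) : (choi E).rank ≤ s ^ 2 - d ^ 2 + 1 := by
  obtain rfl | hd := Nat.eq_zero_or_pos d
  · exact (choi E).rank_le_card_width.trans (by simp [sq])
  have : NeZero d := ⟨hd.ne'⟩
  obtain ⟨k, K, hK, -⟩ := hE
  obtain rfl : E = fun X => ∑ i, K i * X * (K i)ᴴ := funext hK
  obtain ⟨S, R, p, ⟨_, KS, hS, -⟩, ⟨_, KR, hR, -⟩, hp, hRES⟩ := hcorr
  let M : _ × (Fin k × _) → Mat d := fun t => KR t.1 * (K t.2.1 * KS t.2.2)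
  have hM : ∀ X, ∑ t, M t * X * (M t)ᴴ = (p : ℂ) • X := fun X => by
    rw [← hRES, hS, hR]
    beta_reduce
    rw [sum_kraus_comp K KS, sum_kraus_comp KR]
  choose c hc using exists_eq_smul_one_of_kraus_eq_smul M _ hM
  obtain ⟨⟨b, i₀, a⟩, hc₀⟩ : ∃ t, c t ≠ 0 := by
    by_contra! h
    have := hM 1
    simp only [hc, h, zero_smul, Matrix.zero_mul, Finset.sum_const_zero] at this
    exact smul_ne_zero (by exact_mod_cast hp.ne') one_ne_zero this.symm
  let L := sandwich (KR b) (KS a)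
  have hLK : ∀ i, L (K i) = c (b, i, a) • 1 := fun i => by
    rw [sandwich_apply, Matrix.mul_assoc]
    exact hc (b, i, a)
  have hspan : Submodule.span ℂ (Set.range K) ≤ Submodule.comap L (ℂ ∙ 1) :=
    Submodule.span_le.2 <| Set.range_subset_iff.2 fun i =>
      Submodule.mem_span_singleton.2 ⟨_, (hLK i).symm⟩
  have hdim := finrank_comap_span_singleton_add L (sandwich_surjective hc₀ (hLK i₀))
    (one_ne_zero : (1 : Mat d) ≠ 0)
  simp only [Module.finrank_matrix, Fintype.card_fin, Module.finrank_self, mul_one] at hdim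
  rw [rank_choi_kraus, sq, sq]
  exact (Submodule.finrank_mono hspan).trans (by omega)

lemma posSemidef_one_sub_mul_conjTranspose {m n : Type} [Fintype m] [DecidableEq m] [Fintype n]
    [DecidableEq n] {V : Matrix m n ℂ} (hV : Vᴴ * V = 1) : (1 - V * Vᴴ).PosSemidef := by
  -- `1 - V Vᴴ` is a projection, hence equal to `(1 - V Vᴴ)ᴴ (1 - V Vᴴ)`.
  have hproj : 1 - V * Vᴴ = (1 - V * Vᴴ)ᴴ * (1 - V * Vᴴ) := by
    rw [conjTranspose_sub, conjTranspose_one, conjTranspose_mul, conjTranspose_conjTranspose,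
      sub_mul, mul_sub, mul_sub, Matrix.one_mul, Matrix.mul_one, Matrix.one_mul,
      Matrix.mul_assoc, ← Matrix.mul_assoc Vᴴ, hV, Matrix.one_mul]
    abel
  rw [hproj]
  exact posSemidef_conjTranspose_mul_self _

lemma isSubchannel_conj {m n : Type} [Fintype m] [Fintype n] [DecidableEq n]
    {V : Matrix m n ℂ} (hV : (1 - Vᴴ * V).PosSemidef) :
    IsSubchannel fun X : Matrix n n ℂ => V * X * Vᴴ := by
  simpa using isSubchannel_kraus (fun _ : Unit => V) (by simpa using hV)

section Corner

variable {d s : ℕ}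

def cornerIncl (hds : d ≤ s) : Matrix (Fin s) (Fin d) ℂ :=
  (1 : Mat s).submatrix id (Fin.castLE hds)

lemma conjTranspose_cornerIncl_mul_mul (hds : d ≤ s) (A : Mat s) :
    (cornerIncl hds)ᴴ * A * cornerIncl hds = A.submatrix (Fin.castLE hds) (Fin.castLE hds) := by
  ext i j
  simp [cornerIncl, Matrix.mul_apply, Matrix.one_apply]

lemma conjTranspose_cornerIncl_mul_self (hds : d ≤ s) :
    (cornerIncl hds)ᴴ * cornerIncl hds = 1 := by
  simpa [submatrix_one _ (Fin.castLE_injective hds)] using conjTranspose_cornerIncl_mul_mul hds 1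

end Corner

lemma star_ofReal_sqrt_mul_self {r : ℝ} (hr : 0 ≤ r) : star (√r : ℂ) * √r = r := by
  rw [Complex.star_def, Complex.conj_ofReal, ← Complex.ofReal_mul, Real.mul_self_sqrt hr]

section Extremal

variable (d s : ℕ)

abbrev OffCorner := {p : Fin s × Fin s // ¬((p.1 : ℕ) < d ∧ (p.2 : ℕ) < d)}

def offCornerCount (x : Fin s) : ℕ :=
  (Finset.univ.filter fun y : Fin s => ¬((y : ℕ) < d ∧ (x : ℕ) < d)).card

-- Column `x` is hit by `offCornerCount d s x + 1` Kraus operators (the off-corner matrix units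
-- and the diagonal one); these weights make the channel trace preserving.
def colWeight (x : Fin s) : ℝ := ((offCornerCount d s x : ℝ) + 1)⁻¹

def cornerWeight : ℝ := ((Finset.univ.filter fun y : Fin s => ¬(y : ℕ) < d).card + 1 : ℝ)⁻¹

lemma colWeight_of_lt {x : Fin s} (hx : (x : ℕ) < d) : colWeight d s x = cornerWeight d s := by
  simp [colWeight, offCornerCount, cornerWeight, hx]

lemma colWeight_pos (x : Fin s) : 0 < colWeight d s x := by
  unfold colWeight; positivity

lemma cornerWeight_pos : 0 < cornerWeight d s := by
  unfold cornerWeight; positivity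

def extremalKraus : Option (OffCorner d s) → Mat s
  | none => diagonal fun x => (√(colWeight d s x) : ℂ)
  | some p => (√(colWeight d s p.1.2) : ℂ) • single p.1.1 p.1.2 1

def extremalChannel : Mat s → Mat s :=
  fun X => ∑ o, extremalKraus d s o * X * (extremalKraus d s o)ᴴ

lemma sum_offCorner_snd {M : Type*} [AddCommMonoid M] (g : Fin s → M) :
    ∑ p : OffCorner d s, g p.1.2 = ∑ x, offCornerCount d s x • g x := by
  rw [← Finset.sum_subtype
      (Finset.univ.filter fun p : Fin s × Fin s => ¬((p.1 : ℕ) < d ∧ (p.2 : ℕ) < d)) (by simp)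
      (fun p => g p.2), Finset.sum_filter,
    Fintype.sum_prod_type, Finset.sum_comm]
  refine Finset.sum_congr rfl fun x _ => ?_
  rw [← Finset.sum_filter]
  exact Finset.sum_const (g x)

lemma sum_extremalKraus_conjTranspose_mul :
    ∑ o, (extremalKraus d s o)ᴴ * extremalKraus d s o = 1 := by
  have hsq : ∀ x, star (√(colWeight d s x) : ℂ) * √(colWeight d s x) = colWeight d s x :=
    fun x => star_ofReal_sqrt_mul_self (colWeight_pos d s x).le
  have hsome : ∀ p : OffCorner d s, (extremalKraus d s (some p))ᴴ * extremalKraus d s (some p)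
      = single p.1.2 p.1.2 (colWeight d s p.1.2 : ℂ) := by
    intro p
    simp only [extremalKraus, conjTranspose_single, single_mul_single_same, smul_single,
      smul_eq_mul, mul_one, hsq]
  rw [Fintype.sum_option, Finset.sum_congr rfl fun p _ => hsome p,
    sum_offCorner_snd d s fun x => single x x (colWeight d s x : ℂ)]
  simp only [extremalKraus, diagonal_conjTranspose, diagonal_mul_diagonal, Pi.star_apply, hsq]
  rw [← sum_single_eq_diagonal, ← Finset.sum_add_distrib, ← sum_single_one]
  refine Finset.sum_congr rfl fun x _ => ?_
  rw [smul_single, ← single_add, colWeight, nsmul_eq_mul]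
  congr 1
  push_cast
  field_simp
  ring

variable {d s}

lemma card_offCorner (hds : d ≤ s) : Fintype.card (OffCorner d s) = s * s - d * d := by
  rw [Fintype.card_subtype_compl, Fintype.card_subtype, ← Finset.univ_product_univ,
    Finset.filter_product (fun i : Fin s => (i : ℕ) < d) (fun i : Fin s => (i : ℕ) < d),
    Finset.card_product, Fin.card_filter_val_lt, min_eq_right hds]
  simp

lemma cornerIncl_conj_extremalKraus_none (hds : d ≤ s) :
    (cornerIncl hds)ᴴ * extremalKraus d s none * cornerIncl hds
      = (√(cornerWeight d s) : ℂ) • 1 := by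
  rw [conjTranspose_cornerIncl_mul_mul, extremalKraus,
    submatrix_diagonal _ _ (Fin.castLE_injective hds), smul_one_eq_diagonal]
  congr 1
  funext i
  rw [Function.comp_apply, colWeight_of_lt d s (by simp)]

lemma cornerIncl_conj_extremalKraus_some (hds : d ≤ s) (p : OffCorner d s) :
    (cornerIncl hds)ᴴ * extremalKraus d s (some p) * cornerIncl hds = 0 := by
  obtain ⟨⟨y, x⟩, hyx⟩ := p
  rw [conjTranspose_cornerIncl_mul_mul]
  ext i j
  simp only [extremalKraus, submatrix_apply, Matrix.smul_apply, single_apply, Matrix.zero_apply]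
  rw [if_neg, smul_zero]
  rintro ⟨rfl, rfl⟩
  exact hyx ⟨i.2, j.2⟩

lemma cornerIncl_conj_extremalChannel (hds : d ≤ s) (X : Mat d) :
    (cornerIncl hds)ᴴ
        * (∑ o, extremalKraus d s o * (cornerIncl hds * X * (cornerIncl hds)ᴴ)
          * (extremalKraus d s o)ᴴ) * cornerIncl hds
      = (cornerWeight d s : ℂ) • X := by
  have hconj : ∀ (V : Matrix (Fin s) (Fin d) ℂ) (K : Mat s),
      Vᴴ * (K * (V * X * Vᴴ) * Kᴴ) * V = (Vᴴ * K * V) * X * (Vᴴ * K * V)ᴴ := fun V K => by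
    simp only [conjTranspose_mul, conjTranspose_conjTranspose, Matrix.mul_assoc]
  rw [Matrix.mul_sum, Matrix.sum_mul, Finset.sum_congr rfl fun o _ => hconj _ _,
    Fintype.sum_option, cornerIncl_conj_extremalKraus_none]
  simp only [cornerIncl_conj_extremalKraus_some, Matrix.zero_mul, Finset.sum_const_zero, add_zero]
  rw [conjTranspose_smul, conjTranspose_one, Matrix.smul_mul, Matrix.one_mul, Matrix.mul_smul,
    Matrix.mul_one, smul_smul, star_ofReal_sqrt_mul_self (cornerWeight_pos d s).le]

lemma isChannel_extremalChannel : IsChannel (extremalChannel d s) :=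
  isChannel_kraus _ (sum_extremalKraus_conjTranspose_mul d s)

lemma probCorrectable_extremalChannel (hds : d ≤ s) : ProbCorrectable d (extremalChannel d s) := by
  have hV := conjTranspose_cornerIncl_mul_self hds
  have hS : IsSubchannel fun X : Mat d => cornerIncl hds * X * (cornerIncl hds)ᴴ :=
    isSubchannel_conj (by rw [hV, sub_self]; exact .zero)
  have hR : IsSubchannel fun Y : Mat s => (cornerIncl hds)ᴴ * Y * cornerIncl hds := by
    simpa using isSubchannel_conj (V := (cornerIncl hds)ᴴ)
      (by simpa using posSemidef_one_sub_mul_conjTranspose hV)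
  refine ⟨_, _, cornerWeight d s, hS, hR, cornerWeight_pos d s, fun X => ?_⟩
  unfold extremalChannel
  exact cornerIncl_conj_extremalChannel hds X

lemma linearIndependent_extremalKraus (hd : 1 ≤ d) (hds : d ≤ s) :
    LinearIndependent ℂ (extremalKraus d s) := by
  have : NeZero d := ⟨by omega⟩
  have hcases : extremalKraus d s
      = fun o => Option.casesOn' o (extremalKraus d s none) (extremalKraus d s ∘ some) := by
    funext o; cases o <;> rfl
  rw [hcases, linearIndependent_option']
  constructor
  · have hw : ∀ p : OffCorner d s, (√(colWeight d s p.1.2) : ℂ) ≠ 0 := fun p => by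
      simpa [Real.sqrt_eq_zero'] using colWeight_pos d s p.1.2
    have hv : extremalKraus d s ∘ some
        = fun p => Units.mk0 _ (hw p) • (stdBasis ℂ (Fin s) (Fin s) ∘ Subtype.val) p := by
      funext ⟨⟨y, x⟩, _⟩
      simp [extremalKraus, stdBasis_eq_single]
    rw [hv]
    exact ((stdBasis ℂ _ _).linearIndependent.comp _ Subtype.val_injective).units_smul _
  · -- compressing to the corner kills the off-corner operators but not the diagonal one
    let L := sandwich (cornerIncl hds)ᴴ (cornerIncl hds)
    have hspan : Submodule.span ℂ (Set.range (extremalKraus d s ∘ some)) ≤ LinearMap.ker L :=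
      Submodule.span_le.2 <| Set.range_subset_iff.2 fun p =>
        cornerIncl_conj_extremalKraus_some hds p
    intro hmem
    have := hspan hmem
    rw [LinearMap.mem_ker, sandwich_apply, cornerIncl_conj_extremalKraus_none] at this
    exact smul_ne_zero (by simpa [Real.sqrt_eq_zero'] using cornerWeight_pos d s) one_ne_zero this

lemma rank_choi_extremalChannel (hd : 1 ≤ d) (hds : d ≤ s) :
    (choi (extremalChannel d s)).rank = s ^ 2 - d ^ 2 + 1 := by
  unfold extremalChannel
  rw [rank_choi_kraus, finrank_span_eq_card (linearIndependent_extremalKraus hd hds),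
    Fintype.card_option, card_offCorner hds, sq, sq]

end Extremal

/-- Theorem 3 (B): the maximal Choi rank of channels on `M_s` probabilistically correctable
for `ℂ^d` is `s² − d² + 1`. -/
theorem stmt_10 (d s : ℕ) (hd : 1 ≤ d) (hds : d ≤ s) :
    (∀ E : Mat s → Mat s, IsChannel E → ProbCorrectable d E →
      (choi E).rank ≤ s ^ 2 - d ^ 2 + 1) ∧
    (∃ E : Mat s → Mat s, IsChannel E ∧ ProbCorrectable d E ∧
      (choi E).rank = s ^ 2 - d ^ 2 + 1) :=
  ⟨fun _ hE hcorr => rank_choi_le_of_probCorrectable hE hcorr,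
    _, isChannel_extremalChannel, probCorrectable_extremalChannel hds,
    rank_choi_extremalChannel hd hds⟩
end
end

section
/- Let 2 ≤ d ≤ s. There exists a channel E on M_s admitting a Kraus representation in which every Kraus operator is a diagonal matrix, whose Choi rank equals ⌈s/(d−1)⌉, and which is not probabilistically correctable for ℂ^d. In particular, r(d,s)·(d−1) < s. -/
open Matrix Kronecker BigOperators
open scoped ComplexOrder

noncomputable section

/-!
A channel `X ↦ ∑ᵢ Pᵢ X Pᵢ` built from `m = ⌈s/(d-1)⌉` orthogonal diagonal projections `Pᵢ`,
each of rank at most `d - 1`, has Choi rank `m`, since its Kraus operators are Hilbert–Schmidt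
orthogonal. If `R ∘ E ∘ S = p • id`, the composed Kraus operators `Bⱼ Pᵢ Aₖ` form a Kraus
representation of `p • id` on `M_d`. Testing it on `X = x x*` against vectors `u ⊥ x` shows that
every such operator maps `x` into `ℂ x`, so all of them are scalar and one is a nonzero scalar,
of rank `d`; but `rank (Bⱼ Pᵢ Aₖ) ≤ rank Pᵢ < d`. Hence `r(d,s) ≤ m - 1`, and
`(m - 1)(d - 1) < s`.
-/

def krausMap {ι m n : Type*} [Fintype ι] [Fintype n] (K : ι → Matrix m n ℂ)
    (X : Matrix n n ℂ) : Matrix m m ℂ :=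
  ∑ i, K i * X * (K i)ᴴ

lemma krausMap_comp {ι κ l m n : Type*} [Fintype ι] [Fintype κ] [Fintype m] [Fintype n]
    (B : ι → Matrix l m ℂ) (A : κ → Matrix m n ℂ) (X : Matrix n n ℂ) :
    krausMap B (krausMap A X) = krausMap (fun z : ι × κ => B z.1 * A z.2) X := by
  simp only [krausMap, Fintype.sum_prod_type, Matrix.mul_sum, Matrix.sum_mul, conjTranspose_mul,
    Matrix.mul_assoc]

section ScalarKraus

variable {ι n : Type*} [Fintype ι] [Fintype n]

lemma exists_eq_smul_of_forall_dotProduct_eq_zero {x y : n → ℂ}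
    (h : ∀ u : n → ℂ, star u ⬝ᵥ x = 0 → star u ⬝ᵥ y = 0) : ∃ c : ℂ, y = c • x := by
  have hy : WithLp.toLp 2 y ∈ (ℂ ∙ WithLp.toLp 2 x)ᗮᗮ := by
    refine (Submodule.mem_orthogonal _ _).2 fun u hu => ?_
    rw [Submodule.mem_orthogonal_singleton_iff_inner_left] at hu
    simp only [EuclideanSpace.inner_eq_star_dotProduct, dotProduct_comm _ (star _)] at hu ⊢
    exact h _ hu
  rw [Submodule.orthogonal_orthogonal, Submodule.mem_span_singleton] at hy
  obtain ⟨c, hc⟩ := hy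
  exact ⟨c, congrArg WithLp.ofLp hc.symm⟩

lemma Matrix.exists_eq_smul_one_of_forall_mulVec_eq_smul {K : Type*} [Field K] [DecidableEq n]
    {M : Matrix n n K} (h : ∀ x, ∃ c : K, M *ᵥ x = c • x) : ∃ c : K, M = c • 1 := by
  obtain ⟨c, hc⟩ := LinearMap.exists_eq_smul_id_of_forall_notLinearIndependent
    (f := toLin' M) fun x hx => by
      obtain ⟨c, hcx⟩ := h x
      simpa using LinearIndependent.pair_iff.1 hx c (-1) (by simp [hcx])
  exact ⟨c, by rw [← LinearMap.toMatrix'_toLin' M, hc, map_smul, Module.End.one_eq_id,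
    LinearMap.toMatrix'_id]⟩

lemma mul_vecMulVec_star_mul_conjTranspose {m : Type*} (M : Matrix m n ℂ) (x : n → ℂ) :
    M * vecMulVec x (star x) * Mᴴ = vecMulVec (M *ᵥ x) (star (M *ᵥ x)) := by
  rw [mul_vecMulVec, vecMulVec_mul, star_mulVec]

lemma star_dotProduct_vecMulVec_star_mulVec (w u : n → ℂ) :
    star u ⬝ᵥ vecMulVec w (star w) *ᵥ u = Complex.normSq (star u ⬝ᵥ w) := by
  rw [vecMulVec_mulVec, dotProduct_smul, ← Complex.mul_conj, star_dotProduct w u]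
  simp

lemma exists_mulVec_eq_smul_of_krausMap_eq_smul {M : ι → Matrix n n ℂ} {p : ℂ}
    (h : ∀ X, krausMap M X = p • X) (a : ι) (x : n → ℂ) : ∃ c : ℂ, M a *ᵥ x = c • x := by
  refine exists_eq_smul_of_forall_dotProduct_eq_zero fun u hu => ?_
  have hsum : ∑ b, Complex.normSq (star u ⬝ᵥ M b *ᵥ x) = 0 := by
    have := congrArg (fun Y => star u ⬝ᵥ Y *ᵥ u) (h (vecMulVec x (star x)))
    simp only [krausMap, sum_mulVec, dotProduct_sum, mul_vecMulVec_star_mul_conjTranspose,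
      star_dotProduct_vecMulVec_star_mulVec, smul_mulVec, dotProduct_smul, hu] at this
    rw [map_zero, Complex.ofReal_zero, smul_zero] at this
    exact_mod_cast this
  have := (Finset.sum_eq_zero_iff_of_nonneg fun b _ => Complex.normSq_nonneg _).1 hsum a
    (Finset.mem_univ a)
  exact Complex.normSq_eq_zero.1 this

lemma exists_rank_eq_of_krausMap_eq_smul [DecidableEq n] [Nonempty n] {M : ι → Matrix n n ℂ}
    {p : ℂ} (hp : p ≠ 0) (h : ∀ X, krausMap M X = p • X) :
    ∃ a, (M a).rank = Fintype.card n := by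
  choose c hc using fun a =>
    exists_eq_smul_one_of_forall_mulVec_eq_smul (exists_mulVec_eq_smul_of_krausMap_eq_smul h a)
  obtain ⟨a, ha⟩ : ∃ a, c a ≠ 0 := by
    by_contra! hzero
    obtain ⟨i⟩ := ‹Nonempty n›
    exact hp (by simpa [krausMap, hc, hzero] using (congrFun₂ (h 1) i i).symm)
  refine ⟨a, ?_⟩
  rw [hc a, rank_smul_of_mem_nonZeroDivisors _ (mem_nonZeroDivisors_of_ne_zero ha), rank_one]

end ScalarKraus

theorem not_probCorrectable_of_forall_rank_lt {d s k : ℕ} (hd : 0 < d) (K : Fin k → Mat s)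
    (hK : ∀ i, (K i).rank < d) : ¬ ProbCorrectable d (krausMap K) := by
  rintro ⟨S, R, p, ⟨_, A, hS, -⟩, ⟨_, B, hR, -⟩, hp, hRES⟩
  obtain rfl : S = krausMap A := funext hS
  obtain rfl : R = krausMap B := funext hR
  have hkraus : ∀ X, krausMap (fun z : _ × Fin k × _ => B z.1 * (K z.2.1 * A z.2.2)) X =
      (p : ℂ) • X := fun X => by
    simpa only [krausMap_comp] using hRES X
  have : Nonempty (Fin d) := ⟨⟨0, hd⟩⟩
  obtain ⟨⟨j, i, l⟩, hrank⟩ :=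
    exists_rank_eq_of_krausMap_eq_smul (by exact_mod_cast hp.ne') hkraus
  have hlt : (B j * (K i * A l)).rank < d :=
    ((rank_mul_le_right _ _).trans (rank_mul_le_left _ _)).trans_lt (hK i)
  rw [hrank, Fintype.card_fin] at hlt
  exact lt_irrefl d hlt

lemma choi_krausMap {s k : ℕ} (K : Fin k → Mat s) :
    choi (krausMap K) =
      (Matrix.of fun i (ac : Fin s × Fin s) => star (K i ac.1 ac.2))ᴴ *
        Matrix.of fun i (ac : Fin s × Fin s) => star (K i ac.1 ac.2) := by
  ext ⟨a, c⟩ ⟨a', c'⟩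
  simp [choi, krausMap, Matrix.sum_apply, kroneckerMap_apply, single_apply, mul_apply, ite_and,
    Finset.sum_ite_eq, Finset.sum_ite_eq', mul_comm]

lemma rank_choi_krausMap {s k : ℕ} (K : Fin k → Mat s) :
    (choi (krausMap K)).rank = (Matrix.of fun i j => ((K i)ᴴ * K j).trace).rank := by
  rw [choi_krausMap, rank_conjTranspose_mul_self, ← rank_self_mul_conjTranspose]
  congr 1
  ext i j
  simp only [mul_apply, trace, Fintype.sum_prod_type, of_apply, conjTranspose_apply, diag_apply,
    star_star]
  rw [Finset.sum_comm]

lemma rP_le_rank_choi_sub_one {d s : ℕ} {E : Mat s → Mat s} (hE : IsChannel E)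
    (hnc : ¬ ProbCorrectable d E) : rP d s ≤ (choi E).rank - 1 :=
  csSup_le' fun r hr => by
    by_contra! h
    exact hnc (hr E hE (by omega))

section BlockProj

variable {s m : ℕ} (b : Fin s → Fin m)

def blockProj (t : Fin m) : Mat s :=
  diagonal fun i => if b i = t then 1 else 0

lemma blockProj_conjTranspose (t : Fin m) : (blockProj b t)ᴴ = blockProj b t := by
  simp [blockProj, diagonal_conjTranspose, apply_ite]

lemma blockProj_mul_blockProj (t t' : Fin m) :
    blockProj b t * blockProj b t' = if t = t' then blockProj b t else 0 := by
  rw [blockProj, blockProj, diagonal_mul_diagonal, ← diagonal_zero, ← apply_ite diagonal]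
  congr 1
  grind

lemma sum_blockProj : ∑ t, blockProj b t = 1 := by
  ext i j
  simp [blockProj, Matrix.sum_apply, diagonal_apply, one_apply]

lemma sum_conjTranspose_blockProj_mul_blockProj :
    ∑ t, (blockProj b t)ᴴ * blockProj b t = 1 := by
  simp only [blockProj_conjTranspose, blockProj_mul_blockProj, if_pos, sum_blockProj]

lemma rank_blockProj (t : Fin m) :
    (blockProj b t).rank = Fintype.card {i // b i = t} := by
  simp [blockProj, rank_diagonal]

lemma trace_blockProj (t : Fin m) :
    (blockProj b t).trace = Fintype.card {i // b i = t} := by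
  simp [blockProj, trace, Fintype.card_subtype]

lemma rank_choi_krausMap_blockProj (hb : Function.Surjective b) :
    (choi (krausMap (blockProj b))).rank = m := by
  have hgram : (Matrix.of fun t t' => ((blockProj b t)ᴴ * blockProj b t').trace) =
      diagonal fun t => (Fintype.card {i // b i = t} : ℂ) := by
    ext t t'
    simp [blockProj_conjTranspose, blockProj_mul_blockProj, apply_ite trace, trace_blockProj,
      diagonal_apply]
  have hne : ∀ t, (Fintype.card {i // b i = t} : ℂ) ≠ 0 := fun t => by
    obtain ⟨i, hi⟩ := hb t
    exact Nat.cast_ne_zero.2 (Fintype.card_pos_iff.2 ⟨⟨i, hi⟩⟩).ne'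
  rw [rank_choi_krausMap, hgram, rank_diagonal, Fintype.card_congr (Equiv.subtypeUnivEquiv hne),
    Fintype.card_fin]

end BlockProj

lemma exists_surjective_card_fiber_le {s m k : ℕ} (hk : 0 < k) (hs : s ≤ m * k)
    (hm : m * k < s + k) :
    ∃ b : Fin s → Fin m, Function.Surjective b ∧ ∀ t, Fintype.card {i // b i = t} ≤ k := by
  refine ⟨fun i => ⟨i / k, (Nat.div_lt_iff_lt_mul hk).2 (i.2.trans_le hs)⟩, fun t => ?_,
    fun t => ?_⟩
  · have : (t + 1) * k ≤ m * k := Nat.mul_le_mul_right k t.2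
    refine ⟨⟨t * k, by rw [add_one_mul] at this; omega⟩, Fin.ext (Nat.mul_div_cancel _ hk)⟩
  · refine (Fintype.card_le_of_injective (fun i => (⟨i.1 % k, Nat.mod_lt _ hk⟩ : Fin k))
      fun i j hij => Subtype.ext (Fin.ext ?_)).trans_eq (Fintype.card_fin k)
    have hdiv : (i : ℕ) / k = (j : ℕ) / k := congrArg Fin.val (i.2.trans j.2.symm)
    rw [← Nat.div_add_mod i k, ← Nat.div_add_mod j k, hdiv, Fin.mk.inj hij]

/-- Lemma 3, first part: there is a Schur (diagonal-Kraus) channel on `M_s` of Choi rank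
`⌈s/(d−1)⌉` that is not probabilistically correctable for `ℂ^d`; hence `r(d,s)·(d−1) < s`. -/
theorem stmt_12 (d s : ℕ) (hd : 2 ≤ d) (hds : d ≤ s) :
    (∃ E : Mat s → Mat s,
      (∃ (k : ℕ) (K : Fin k → Mat s),
        (∀ X, E X = ∑ i, K i * X * (K i)ᴴ) ∧ (∑ i, (K i)ᴴ * K i) = 1 ∧
        ∀ i, ∃ v : Fin s → ℂ, K i = Matrix.diagonal v) ∧
      (choi E).rank = (s + d - 2) / (d - 1) ∧
      ¬ ProbCorrectable d E) ∧
    rP d s * (d - 1) < s := by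
  set m := (s + d - 2) / (d - 1)
  have hk : 0 < d - 1 := by omega
  have hm_le : m * (d - 1) ≤ s + d - 2 := Nat.div_mul_le_self _ _
  have hm_gt : s + d - 2 < m * (d - 1) + (d - 1) := Nat.lt_div_mul_add hk
  obtain ⟨b, hb, hfiber⟩ :=
    exists_surjective_card_fiber_le (s := s) (m := m) hk (by omega) (by omega)
  have hchan : IsChannel (krausMap (blockProj b)) :=
    ⟨m, blockProj b, fun _ => rfl, sum_conjTranspose_blockProj_mul_blockProj b⟩
  have hrank := rank_choi_krausMap_blockProj b hb
  have hnc : ¬ ProbCorrectable d (krausMap (blockProj b)) :=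
    not_probCorrectable_of_forall_rank_lt (by omega) _ fun t => by
      rw [rank_blockProj]; exact (hfiber t).trans_lt (by omega)
  refine ⟨⟨_, ⟨m, blockProj b, fun _ => rfl, sum_conjTranspose_blockProj_mul_blockProj b,
    fun t => ⟨_, rfl⟩⟩, hrank, hnc⟩, ?_⟩
  have hrP : rP d s ≤ m - 1 := hrank ▸ rP_le_rank_choi_sub_one hchan hnc
  calc rP d s * (d - 1) ≤ (m - 1) * (d - 1) := Nat.mul_le_mul_right _ hrP
    _ < s := by rw [Nat.sub_one_mul]; omega
end
end

section
/- Let 1 ≤ d ≤ s and let E be a channel on M_s admitting a Kraus representation in which every Kraus operator is a diagonal matrix. If rank J(E) · (d − 1) < s, then E is probabilistically correctable for ℂ^d. -/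
open Matrix Kronecker BigOperators
open scoped ComplexOrder

noncomputable section

/-!
Write the Kraus operators as `K i = diagonal (v i)` and put `u a = (v i a)ᵢ ∈ ℂᵏ`. The Gram
matrix of the `u a` is the principal submatrix of the Choi matrix on the indices `(a, a)`, so the
`u a` span a space of dimension `r ≤ rank J(E)`. Repeatedly removing a subset of at most `r`
indices whose vectors span those of all remaining ones, `s > r (d - 1)` indices can be split into
`d` groups such that one vector `c = u a` (nonzero, as `∑ᵢ |v i a|² = 1`) lies in the span of every
group. If `z j` expresses `c` through the `u b` of group `j`, the encoding `V` with columns `z j`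
and the decoding `W` whose rows are the indicators of the groups satisfy `W K i V = c i • 1`:
the groups are disjoint, so off-diagonal entries vanish. Scaled down to contractions, `V` and `W`
give subchannels with `R (E (S X)) = p • X` for some `p > 0`.
-/

section Span

open Module Submodule

variable {ι K V : Type*} [Field K] [AddCommGroup V] [Module K V]

theorem exists_subset_card_le_finrank_forall_mem_span [Finite ι] (u : ι → V) (T : Finset ι) :
    ∃ B ⊆ T, B.card ≤ finrank K (span K (Set.range u)) ∧ ∀ a ∈ T, u a ∈ span K (u '' B) := by
  classical
  obtain ⟨b, hbT, -, hspan, hind⟩ :=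
    exists_linearIndepOn_extension (linearIndepOn_empty K u) (Set.empty_subset (T : Set ι))
  set B := T.filter (· ∈ b)
  have hB : (B : Set ι) = b := by
    ext a
    simpa [B] using fun hab => hbT hab
  rw [← hB] at hspan hind
  have : Module.Finite K (span K (Set.range u)) := .span_of_finite K (Set.finite_range u)
  refine ⟨B, Finset.filter_subset _ _, ?_, fun a ha => hspan ⟨a, ha, rfl⟩⟩
  calc B.card = finrank K (span K (Set.range fun a : (B : Set ι) => u a)) := by
        rw [finrank_span_eq_card hind]; simp
    _ ≤ finrank K (span K (Set.range u)) :=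
        finrank_mono (span_mono (Set.range_comp_subset_range _ u))

theorem exists_forall_mem_span_fiber_of_finrank_mul_lt_card [Finite ι] (u : ι → V) :
    ∀ (m : ℕ) (T : Finset ι), finrank K (span K (Set.range u)) * m < T.card →
      ∃ a ∈ T, ∃ g : ι → Fin (m + 1), ∀ j, u a ∈ span K (u '' {b | b ∈ T ∧ g b = j}) := by
  classical
  intro m
  induction m with
  | zero =>
    intro T hT
    obtain ⟨a, ha⟩ := Finset.card_pos.mp (by simpa using hT)
    exact ⟨a, ha, 0, fun j => subset_span ⟨a, ⟨ha, Subsingleton.elim (α := Fin 1) _ _⟩, rfl⟩⟩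
  | succ m ih =>
    intro T hT
    obtain ⟨B, hBT, hBcard, hBspan⟩ := exists_subset_card_le_finrank_forall_mem_span (K := K) u T
    obtain ⟨a, ha, g, hg⟩ := ih (T \ B) (by rw [Finset.card_sdiff_of_subset hBT]; lia)
    have haT : a ∈ T := (Finset.mem_sdiff.mp ha).1
    -- `B` becomes the fiber over `0`; it spans `u a` because `a ∈ T`.
    refine ⟨a, haT, fun b => if b ∈ B then 0 else (g b).succ, Fin.cases ?_ fun j => ?_⟩
    · refine span_mono (Set.image_mono fun b hb => ?_) (hBspan a haT)
      simp [hBT hb, Finset.mem_coe.mp hb]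
    · refine span_mono (Set.image_mono fun b hb => ?_) (hg j)
      simp only [Set.mem_ofPred_eq, Finset.mem_sdiff] at hb ⊢
      simp [hb]

theorem exists_fun_of_mem_span_image [Fintype ι] {u : ι → V} {S : Set ι} {c : V}
    (h : c ∈ span K (u '' S)) : ∃ z : ι → K, (∀ a ∉ S, z a = 0) ∧ ∑ a, z a • u a = c := by
  obtain ⟨l, hl, rfl⟩ := (Finsupp.mem_span_image_iff_linearCombination K).mp h
  exact ⟨l, fun a ha => (Finsupp.mem_supported' K l).mp hl a ha,
    by rw [Finsupp.linearCombination_apply, Finsupp.sum_fintype _ _ (by simp)]⟩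

end Span

theorem choi_apply {s : ℕ} (Φ : Mat s → Mat s) (a b a' b' : Fin s) :
    choi Φ (a, b) (a', b') = Φ (single b b' 1) a a' := by
  simp [choi, Matrix.sum_apply, single_apply, ite_and]

theorem sum_diagonal_mul_mul_conjTranspose_apply {n : Type*} [Fintype n] [DecidableEq n] {k : ℕ}
    (v : Fin k → n → ℂ) (X : Matrix n n ℂ) (a b : n) :
    (∑ i, diagonal (v i) * X * (diagonal (v i))ᴴ) a b = (∑ i, v i a * star (v i b)) * X a b := by
  simp only [Matrix.sum_apply, diagonal_conjTranspose, mul_diagonal, diagonal_mul, Finset.sum_mul,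
    Pi.star_apply]
  exact Finset.sum_congr rfl fun i _ => by ring

theorem finrank_span_le_rank_choi {s k : ℕ} {E : Mat s → Mat s} {v : Fin k → Fin s → ℂ}
    (hE : ∀ X, E X = ∑ i, diagonal (v i) * X * (diagonal (v i))ᴴ) :
    Module.finrank ℂ (Submodule.span ℂ (Set.range fun a i => v i a)) ≤ (choi E).rank := by
  set U : Matrix (Fin s) (Fin k) ℂ := Matrix.of fun a i => v i a
  have hGram : U * Uᴴ = (choi E).submatrix (fun a => (a, a)) (fun a => (a, a)) := by
    ext a b
    rw [submatrix_apply, choi_apply, hE, sum_diagonal_mul_mul_conjTranspose_apply]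
    simp [U, mul_apply]
  calc Module.finrank ℂ (Submodule.span ℂ (Set.range fun a i => v i a)) = U.rank :=
        (rank_eq_finrank_span_row U).symm
    _ = (U * Uᴴ).rank := (rank_self_mul_conjTranspose U).symm
    _ ≤ (choi E).rank := hGram ▸ rank_submatrix_le _ _ _

theorem ne_zero_of_sum_conjTranspose_diagonal_mul_eq_one {n : Type*} [Fintype n] [DecidableEq n]
    {k : ℕ} {v : Fin k → n → ℂ} (h : ∑ i, (diagonal (v i))ᴴ * diagonal (v i) = 1) (a : n) :
    (fun i => v i a) ≠ 0 := by
  intro h0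
  have := congrFun (congrFun h a) a
  simp_all [Matrix.sum_apply, funext_iff]

open scoped Matrix.Norms.L2Operator MatrixOrder in
theorem posSemidef_one_sub_conjTranspose_mul_self_of_norm_le_one {m n : Type*} [Fintype m]
    [Fintype n] [DecidableEq n] {M : Matrix m n ℂ} (hM : ‖M‖ ≤ 1) :
    (1 - Mᴴ * M).PosSemidef := by
  rw [← Matrix.le_iff, ← CStarAlgebra.norm_le_one_iff_of_nonneg _
    (posSemidef_conjTranspose_mul_self M).nonneg, l2_opNorm_conjTranspose_mul_self]
  nlinarith [norm_nonneg M]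

theorem isSubchannel_mul_mul_conjTranspose {m n : Type} [Fintype m] [Fintype n] [DecidableEq n]
    {M : Matrix m n ℂ} (hM : (1 - Mᴴ * M).PosSemidef) :
    IsSubchannel fun X : Matrix n n ℂ => M * X * Mᴴ :=
  ⟨1, fun _ => M, fun X => by simp, by simpa using hM⟩

open scoped Matrix.Norms.L2Operator in
theorem exists_pos_isSubchannel_smul {m n : Type} [Fintype m] [Fintype n] [DecidableEq n]
    (M : Matrix m n ℂ) :
    ∃ t : ℝ, 0 < t ∧ IsSubchannel fun X : Matrix n n ℂ => ((t : ℂ) • M) * X * ((t : ℂ) • M)ᴴ := by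
  refine ⟨(‖M‖ + 1)⁻¹, by positivity, isSubchannel_mul_mul_conjTranspose
    (posSemidef_one_sub_conjTranspose_mul_self_of_norm_le_one ?_)⟩
  rw [norm_smul, Complex.norm_real, Real.norm_of_nonneg (by positivity),
    inv_mul_le_iff₀ (by positivity)]
  linarith

theorem smul_one_mul_mul_conjTranspose {n : Type*} [Fintype n] [DecidableEq n] (a : ℂ)
    (X : Matrix n n ℂ) : (a • 1 : Matrix n n ℂ) * X * (a • 1)ᴴ = (Complex.normSq a : ℂ) • X := by
  rw [conjTranspose_smul, conjTranspose_one, smul_mul, one_mul, Matrix.mul_smul, mul_one,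
    smul_smul, Complex.star_def, Complex.normSq_eq_conj_mul_self]

theorem probCorrectable_of_mul_mul_eq_smul_one {d s k : ℕ} {E : Mat s → Mat s}
    {K : Fin k → Mat s} (hE : ∀ X, E X = ∑ i, K i * X * (K i)ᴴ)
    (V : Matrix (Fin s) (Fin d) ℂ) (W : Matrix (Fin d) (Fin s) ℂ) {c : Fin k → ℂ} (hc : c ≠ 0)
    (hWKV : ∀ i, W * K i * V = c i • 1) : ProbCorrectable d E := by
  obtain ⟨t, ht, hV⟩ := exists_pos_isSubchannel_smul V
  obtain ⟨t', ht', hW⟩ := exists_pos_isSubchannel_smul W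
  obtain ⟨i₀, hi₀⟩ := Function.ne_iff.mp hc
  refine ⟨_, _, (t * t') ^ 2 * ∑ i, Complex.normSq (c i), hV, hW, ?_, fun X => ?_⟩
  · have := Finset.sum_pos' (fun i _ => Complex.normSq_nonneg (c i))
      ⟨i₀, Finset.mem_univ _, Complex.normSq_pos.mpr hi₀⟩
    positivity
  have hterm : ∀ i, ((t' : ℂ) • W) * (K i * (((t : ℂ) • V) * X * ((t : ℂ) • V)ᴴ) * (K i)ᴴ) *
      ((t' : ℂ) • W)ᴴ = (((t * t') ^ 2 * Complex.normSq (c i) : ℝ) : ℂ) • X := by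
    intro i
    have hscaled : ((t' : ℂ) • W) * K i * ((t : ℂ) • V) = ((t * t' : ℝ) * c i : ℂ) • 1 := by
      rw [Matrix.smul_mul, Matrix.smul_mul, Matrix.mul_smul, hWKV, smul_smul, smul_smul]
      push_cast
      ring_nf
    calc _ = (((t' : ℂ) • W) * K i * ((t : ℂ) • V)) * X *
          (((t' : ℂ) • W) * K i * ((t : ℂ) • V))ᴴ := by
          simp only [conjTranspose_mul, Matrix.mul_assoc]
      _ = _ := by
          rw [hscaled, smul_one_mul_mul_conjTranspose, Complex.normSq_mul, Complex.normSq_ofReal]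
          push_cast
          ring_nf
  simp only [hE, Matrix.mul_sum, Matrix.sum_mul, hterm, ← Finset.sum_smul]
  push_cast [Finset.mul_sum]
  rfl

theorem indicator_mul_diagonal_mul_eq_smul_one {ι κ : Type*} [Fintype ι] [DecidableEq ι]
    [DecidableEq κ] (g : ι → κ) (z : κ → ι → ℂ) (hz : ∀ j a, g a ≠ j → z j a = 0) (w : ι → ℂ)
    (c : ℂ) (hc : ∀ j, ∑ a, w a * z j a = c) :
    (Matrix.of fun j a => if g a = j then (1 : ℂ) else 0) * diagonal w *
      Matrix.of (fun a j => z j a) = c • 1 := by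
  ext j l
  rw [mul_apply]
  simp only [mul_diagonal, of_apply, ite_mul, one_mul, zero_mul, Matrix.smul_apply, smul_eq_mul]
  by_cases hjl : j = l
  · subst hjl
    rw [one_apply_eq, mul_one, ← hc j]
    exact Finset.sum_congr rfl fun a _ => by by_cases h : g a = j <;> simp [h, hz]
  · rw [one_apply_ne hjl, mul_zero]
    exact Finset.sum_eq_zero fun a _ => by by_cases h : g a = j <;> simp [h, hz, hjl]

theorem stmt_14_general (d s : ℕ) (hd : 1 ≤ d) (E : Mat s → Mat s)
    (hSchur : ∃ (k : ℕ) (K : Fin k → Mat s),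
      (∀ X, E X = ∑ i, K i * X * (K i)ᴴ) ∧ (∑ i, (K i)ᴴ * K i) = 1 ∧
      ∀ i, ∃ v : Fin s → ℂ, K i = Matrix.diagonal v)
    (hrank : (choi E).rank * (d - 1) < s) :
    ProbCorrectable d E := by
  obtain ⟨k, K, hE, hK1, hKdiag⟩ := hSchur
  choose v hv using hKdiag
  obtain rfl : K = fun i => diagonal (v i) := funext hv
  obtain ⟨m, rfl⟩ : ∃ m, d = m + 1 := ⟨d - 1, by omega⟩
  set u : Fin s → Fin k → ℂ := fun a i => v i a
  have hcard : Module.finrank ℂ (Submodule.span ℂ (Set.range u)) * m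
      < (Finset.univ : Finset (Fin s)).card := by
    simpa using (Nat.mul_le_mul_right m (finrank_span_le_rank_choi hE)).trans_lt hrank
  obtain ⟨a, -, g, hspan⟩ :=
    exists_forall_mem_span_fiber_of_finrank_mul_lt_card u m Finset.univ hcard
  choose z hz hzu using fun j => exists_fun_of_mem_span_image (hspan j)
  refine probCorrectable_of_mul_mul_eq_smul_one hE _ _
    (ne_zero_of_sum_conjTranspose_diagonal_mul_eq_one hK1 a) fun i =>
      indicator_mul_diagonal_mul_eq_smul_one g z (fun j b hb => hz j b (by simp [hb])) (v i)
        (u a i) fun j => ?_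
  simpa [u, mul_comm] using congrFun (hzu j) i

/-- Proposition 5: a Schur (diagonal-Kraus) channel on `M_s` with Choi rank `< s/(d−1)`
is probabilistically correctable for `ℂ^d`. -/
theorem stmt_14 (d s : ℕ) (hd : 1 ≤ d) (hds : d ≤ s) (E : Mat s → Mat s)
    (hSchur : ∃ (k : ℕ) (K : Fin k → Mat s),
      (∀ X, E X = ∑ i, K i * X * (K i)ᴴ) ∧ (∑ i, (K i)ᴴ * K i) = 1 ∧
      ∀ i, ∃ v : Fin s → ℂ, K i = Matrix.diagonal v)
    (hrank : (choi E).rank * (d - 1) < s) :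
    ProbCorrectable d E :=
  stmt_14_general d s hd E hSchur hrank
end
end
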